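/- Let 𝔉 be a maximal commuting family of i-boxes in [a,b] and let [x,y] ∈ 𝔉 be exchangeable, i.e. not frozen. Then exactly one of [x₋,y] ∈ 𝔉 or [x,y₊] ∈ 𝔉 holds. -/
import Mathlib


namespace IBoxes

variable {I : Type*}

/-- `gapBelow i x m` encodes `x₋ < m` : no position `t` with `m ≤ t < x` has the color of `x`. -/
def gapBelow (i : ℤ → I) (x m : ℤ) : Prop := ∀ t : ℤ, m ≤ t → t < x → i t ≠ i x

/-- `gapAbove i y m` encodes `m < y₊` : no position `t` with `y < t ≤ m` has the color of `y`. -/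
def gapAbove (i : ℤ → I) (y m : ℤ) : Prop := ∀ t : ℤ, y < t → t ≤ m → i t ≠ i y

/-- `[x,y]` is an `i`-box. -/
def IsBox (i : ℤ → I) (x y : ℤ) : Prop := x ≤ y ∧ i x = i y

/-- Two `i`-boxes commute: `(x₁)₋ < x₂ ≤ y₂ < (y₁)₊` or `(x₂)₋ < x₁ ≤ y₁ < (y₂)₊`. -/
def BoxCommute (i : ℤ → I) (x₁ y₁ x₂ y₂ : ℤ) : Prop :=
  (gapBelow i x₁ x₂ ∧ gapAbove i y₁ y₂) ∨ (gapBelow i x₂ x₁ ∧ gapAbove i y₂ y₁)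

/-- A commuting family of `i`-boxes. -/
def CommFamily (i : ℤ → I) (F : Set (ℤ × ℤ)) : Prop :=
  (∀ p ∈ F, IsBox i p.1 p.2) ∧ ∀ p ∈ F, ∀ q ∈ F, BoxCommute i p.1 p.2 q.1 q.2

/-- All boxes of the family lie in `[a,b]`. -/
def InRange (a b : ℤ) (F : Set (ℤ × ℤ)) : Prop := ∀ p ∈ F, a ≤ p.1 ∧ p.2 ≤ b

/-- A maximal commuting family of `i`-boxes in `[a,b]`. -/
def MaxCommFamily (i : ℤ → I) (a b : ℤ) (F : Set (ℤ × ℤ)) : Prop :=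
  CommFamily i F ∧ InRange a b F ∧
    ∀ G : Set (ℤ × ℤ), CommFamily i G → InRange a b G → F ⊆ G → F = G

/-- `x' = x₊`, the next position with the color of `x`. -/
def NextSame (i : ℤ → I) (x x' : ℤ) : Prop :=
  x < x' ∧ i x' = i x ∧ ∀ t : ℤ, x < t → t < x' → i t ≠ i x

/-- `y' = y₋`, the previous position with the color of `y`. -/
def PrevSame (i : ℤ → I) (y y' : ℤ) : Prop :=
  y' < y ∧ i y' = i y ∧ ∀ t : ℤ, y' < t → t < y → i t ≠ i y

/-- `p` is frozen in `[a,b]` : `(p.1)₋ < a` and `b < (p.2)₊`. -/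
def Frozen (i : ℤ → I) (a b : ℤ) (p : ℤ × ℤ) : Prop :=
  gapBelow i p.1 a ∧ gapAbove i p.2 b

/-- `p = [lo, hi}`, i.e. `p = [lo, hi(i lo)⁻]`. -/
def IsLBox (i : ℤ → I) (lo hi : ℤ) (p : ℤ × ℤ) : Prop :=
  p.1 = lo ∧ lo ≤ p.2 ∧ p.2 ≤ hi ∧ i p.2 = i lo ∧ ∀ t : ℤ, p.2 < t → t ≤ hi → i t ≠ i lo

/-- `p = {lo, hi]`, i.e. `p = [lo(i hi)⁺, hi]`. -/
def IsRBox (i : ℤ → I) (lo hi : ℤ) (p : ℤ × ℤ) : Prop :=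
  p.2 = hi ∧ lo ≤ p.1 ∧ p.1 ≤ hi ∧ i p.1 = i hi ∧ ∀ t : ℤ, lo ≤ t → t < p.1 → i t ≠ i hi

/-- An admissible chain of `i`-boxes `𝔠_k = box k` (for `1 ≤ k ≤ l`) with envelopes
`𝔠̃_k = [lo k, hi k]`. -/
structure AdmissibleChain (i : ℤ → I) (l : ℕ) where
  lo : ℕ → ℤ
  hi : ℕ → ℤ
  box : ℕ → ℤ × ℤ
  size : ∀ k : ℕ, 1 ≤ k → k ≤ l → hi k = lo k + (k : ℤ) - 1
  step : ∀ k : ℕ, 1 ≤ k → k < l →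
    (lo (k + 1) = lo k - 1 ∧ hi (k + 1) = hi k) ∨
    (lo (k + 1) = lo k ∧ hi (k + 1) = hi k + 1)
  box_spec : ∀ k : ℕ, 1 ≤ k → k ≤ l →
    IsLBox i (lo k) (hi k) (box k) ∨ IsRBox i (lo k) (hi k) (box k)
  cover : ∀ k : ℕ, 1 ≤ k → k ≤ l →
    Set.Icc (lo k) (hi k) = ⋃ j ∈ Set.Icc 1 k, Set.Icc ((box j).1) ((box j).2)

/-- The set of boxes appearing in an admissible chain. -/
def boxesOf {i : ℤ → I} {l : ℕ} (C : AdmissibleChain i l) : Set (ℤ × ℤ) :=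
  {p | ∃ k : ℕ, 1 ≤ k ∧ k ≤ l ∧ C.box k = p}

/-- The envelope `𝔠̃_k` as a set, with `𝔠̃_0 = ∅`. -/
def env {i : ℤ → I} {l : ℕ} (C : AdmissibleChain i l) (k : ℕ) : Set ℤ :=
  if k = 0 then ∅ else Set.Icc (C.lo k) (C.hi k)

/-- `z` is the effective end of the box `(x,y)` of the maximal commuting family `F` in `[a,b]`. -/
def IsEffectiveEnd (i : ℤ → I) (a b : ℤ) (F : Set (ℤ × ℤ)) (x y z : ℤ) : Prop :=
  z ∈ ({x, y} : Set ℤ) ∧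
    ∀ (l : ℕ) (C : AdmissibleChain i l), C.lo l = a → C.hi l = b → boxesOf C = F →
      ∀ k : ℕ, 1 ≤ k → k ≤ l → C.box k = (x, y) →
        ({z} : Set ℤ) = env C k \ env C (k - 1)

/-- `[x,y]` is in the left corner of `F`: `[x₊,y] ∈ F` and `[x,y₊] ∈ F`. -/
def LeftCorner (i : ℤ → I) (F : Set (ℤ × ℤ)) (x y : ℤ) : Prop :=
  (∃ x', NextSame i x x' ∧ (x', y) ∈ F) ∧ (∃ y', NextSame i y y' ∧ (x, y') ∈ F)

/-- `[x,y]` is in the right corner of `F`: `[x,y₋] ∈ F` and `[x₋,y] ∈ F`. -/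
def RightCorner (i : ℤ → I) (F : Set (ℤ × ℤ)) (x y : ℤ) : Prop :=
  (∃ y', PrevSame i y y' ∧ (x, y') ∈ F) ∧ (∃ x', PrevSame i x x' ∧ (x', y) ∈ F)

/-- The number of positions of color `j` in `[x,y]`. -/
noncomputable def colorCount (i : ℤ → I) (j : I) (x y : ℤ) : ℕ :=
  {s : ℤ | x ≤ s ∧ s ≤ y ∧ i s = j}.ncard

private lemma boxCommute_self' (i : ℤ → I) (x y : ℤ) : BoxCommute i x y x y :=
  Or.inl ⟨fun _ h1 h2 => absurd h1 (not_le.mpr h2),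
          fun _ h1 h2 => absurd h2 (not_le.mpr h1)⟩

private lemma mem_of_commutes (i : ℤ → I) (a b : ℤ) (F : Set (ℤ × ℤ))
    (hF : MaxCommFamily i a b F) (n : ℤ × ℤ) (hbox : IsBox i n.1 n.2)
    (hr : a ≤ n.1 ∧ n.2 ≤ b)
    (hc : ∀ p ∈ F, BoxCommute i p.1 p.2 n.1 n.2) : n ∈ F := by
  have hG : CommFamily i (insert n F) := by
    constructor
    · rintro p (rfl | hp)
      · exact hbox
      · exact hF.1.1 p hp
    · rintro p (rfl | hp) q (rfl | hq)
      · exact boxCommute_self' i _ _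
      · exact Or.symm (hc q hq)
      · exact hc p hp
      · exact hF.1.2 p hp q hq
  have hR : InRange a b (insert n F) := by
    rintro p (rfl | hp)
    · exact hr
    · exact hF.2.1 p hp
  have := hF.2.2 _ hG hR (Set.subset_insert _ _)
  rw [this]; exact Set.mem_insert _ _

private lemma left_case (i : ℤ → I) (a b : ℤ) (F : Set (ℤ × ℤ))
    (hF : MaxCommFamily i a b F) (x y : ℤ) (hxy : (x, y) ∈ F)
    (h : ¬ gapBelow i x a) :
    (∃ x', PrevSame i x x' ∧ (x', y) ∈ F) ∨ (∃ y', NextSame i y y' ∧ (x, y') ∈ F) := by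
  classical
  obtain ⟨w, hwa, hwx, hwc⟩ : ∃ w, a ≤ w ∧ w < x ∧ i w = i x := by
    simp only [gapBelow, not_forall] at h
    obtain ⟨t, h1, h2, h3⟩ := h
    exact ⟨t, h1, h2, not_not.mp h3⟩
  obtain ⟨xm, ⟨hxm_lt, hxm_c⟩, hxm_max⟩ :
      ∃ xm, (xm < x ∧ i xm = i x) ∧ ∀ z, (z < x ∧ i z = i x) → z ≤ xm :=
    Int.exists_greatest_of_bdd ⟨x, fun z hz => hz.1.le⟩ ⟨w, hwx, hwc⟩
  have hprev : PrevSame i x xm :=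
    ⟨hxm_lt, hxm_c, fun t h1 h2 h3 => absurd (hxm_max t ⟨h2, h3⟩) (not_le.mpr h1)⟩
  have haxm : a ≤ xm := le_trans hwa (hxm_max w ⟨hwx, hwc⟩)
  have hbox : IsBox i x y := hF.1.1 _ hxy
  by_cases hall : ∀ p ∈ F, BoxCommute i p.1 p.2 xm y
  · exact Or.inl ⟨xm, hprev, mem_of_commutes i a b F hF (xm, y)
      ⟨le_trans hxm_lt.le hbox.1, hxm_c.trans hbox.2⟩
      ⟨haxm, (hF.2.1 _ hxy).2⟩ hall⟩
  · push_neg at hall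
    obtain ⟨⟨u, v⟩, huv, hnc⟩ := hall
    have hcuv : BoxCommute i u v x y := hF.1.2 _ huv _ hxy
    have hA : gapBelow i u x ∧ gapAbove i v y := by
      rcases hcuv with hA | hB
      · exact hA
      · exact absurd (Or.inr ⟨fun t h1 h2 h3 =>
          hB.1 t h1 (h2.trans hxm_lt) (h3.trans hxm_c), hB.2⟩) hnc
    rw [BoxCommute, not_or] at hnc
    have hngA : ¬ gapBelow i u xm := fun hg => hnc.1 ⟨hg, hA.2⟩
    obtain ⟨t, htxm, htu, htc⟩ : ∃ t, xm ≤ t ∧ t < u ∧ i t = i u := by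
      simp only [gapBelow, not_forall] at hngA
      obtain ⟨t, h1, h2, h3⟩ := hngA
      exact ⟨t, h1, h2, not_not.mp h3⟩
    have htx : t < x := by
      by_contra hge
      exact hA.1 t (not_lt.mp hge) htu htc
    have hgBxm : gapBelow i xm u := by
      intro s h1 h2 _
      omega
    have hngAy : ¬ gapAbove i y v := fun hg => hnc.2 ⟨hgBxm, hg⟩
    obtain ⟨s, hys, hsv, hsc⟩ : ∃ s, y < s ∧ s ≤ v ∧ i s = i y := by
      simp only [gapAbove, not_forall] at hngAy
      obtain ⟨t', h1, h2, h3⟩ := hngAy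
      exact ⟨t', h1, h2, not_not.mp h3⟩
    obtain ⟨yp, ⟨hyp_lt, hyp_c⟩, hyp_min⟩ :
        ∃ yp, (y < yp ∧ i yp = i y) ∧ ∀ z, (y < z ∧ i z = i y) → yp ≤ z :=
      Int.exists_least_of_bdd ⟨y + 1, fun z hz => by omega⟩ ⟨s, hys, hsc⟩
    have hnext : NextSame i y yp :=
      ⟨hyp_lt, hyp_c, fun r h1 h2 h3 => absurd (hyp_min r ⟨h1, h3⟩) (not_le.mpr h2)⟩
    have hypv : yp ≤ v := le_trans (hyp_min s ⟨hys, hsc⟩) hsv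
    have hypb : yp ≤ b := le_trans hypv (hF.2.1 _ huv).2
    refine Or.inr ⟨yp, hnext, mem_of_commutes i a b F hF (x, yp)
      ⟨le_trans hbox.1 hyp_lt.le, hbox.2.trans hyp_c.symm⟩
      ⟨(hF.2.1 _ hxy).1, hypb⟩ ?_⟩
    rintro ⟨p, q⟩ hpq
    have hce : BoxCommute i p q x y := hF.1.2 _ hpq _ hxy
    rcases hce with hAe | hBe
    · by_cases hgq : gapAbove i q yp
      · exact Or.inl ⟨hAe.1, hgq⟩
      · obtain ⟨r, hqr, hryp, hrc⟩ : ∃ r, q < r ∧ r ≤ yp ∧ i r = i q := by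
          simp only [gapAbove, not_forall] at hgq
          obtain ⟨r, h1, h2, h3⟩ := hgq
          exact ⟨r, h1, h2, not_not.mp h3⟩
        have hyr : y < r := by
          by_contra hle
          exact hAe.2 r hqr (not_lt.mp hle) hrc
        have hed : BoxCommute i p q u v := hF.1.2 _ hpq _ huv
        rcases hed with hA' | hB'
        · exact absurd hrc (hA'.2 r hqr (hryp.trans hypv))
        · have htp : t < p := by
            by_contra hle
            exact hB'.1 t (not_lt.mp hle) htu htc
          refine Or.inr ⟨?_, ?_⟩
          · intro s' h1 h2 h3
            exact hprev.2.2 s' (by omega) h2 h3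
          · intro s' h1 h2 _
            omega
    · refine Or.inr ⟨hBe.1, ?_⟩
      intro r h1 h2 h3
      exact hBe.2 r (hyp_lt.trans h1) h2 (h3.trans hyp_c)

private lemma right_case (i : ℤ → I) (a b : ℤ) (F : Set (ℤ × ℤ))
    (hF : MaxCommFamily i a b F) (x y : ℤ) (hxy : (x, y) ∈ F)
    (h : ¬ gapAbove i y b) :
    (∃ x', PrevSame i x x' ∧ (x', y) ∈ F) ∨ (∃ y', NextSame i y y' ∧ (x, y') ∈ F) := by
  classical
  obtain ⟨w, hwy, hwb, hwc⟩ : ∃ w, y < w ∧ w ≤ b ∧ i w = i y := by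
    simp only [gapAbove, not_forall] at h
    obtain ⟨t, h1, h2, h3⟩ := h
    exact ⟨t, h1, h2, not_not.mp h3⟩
  obtain ⟨yp, ⟨hyp_lt, hyp_c⟩, hyp_min⟩ :
      ∃ yp, (y < yp ∧ i yp = i y) ∧ ∀ z, (y < z ∧ i z = i y) → yp ≤ z :=
    Int.exists_least_of_bdd ⟨y + 1, fun z hz => by omega⟩ ⟨w, hwy, hwc⟩
  have hnext : NextSame i y yp :=
    ⟨hyp_lt, hyp_c, fun r h1 h2 h3 => absurd (hyp_min r ⟨h1, h3⟩) (not_le.mpr h2)⟩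
  have hypb : yp ≤ b := le_trans (hyp_min w ⟨hwy, hwc⟩) hwb
  have hbox : IsBox i x y := hF.1.1 _ hxy
  by_cases hall : ∀ p ∈ F, BoxCommute i p.1 p.2 x yp
  · exact Or.inr ⟨yp, hnext, mem_of_commutes i a b F hF (x, yp)
      ⟨le_trans hbox.1 hyp_lt.le, hbox.2.trans hyp_c.symm⟩
      ⟨(hF.2.1 _ hxy).1, hypb⟩ hall⟩
  · push_neg at hall
    obtain ⟨⟨u, v⟩, huv, hnc⟩ := hall
    have hcuv : BoxCommute i u v x y := hF.1.2 _ huv _ hxy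
    have hA : gapBelow i u x ∧ gapAbove i v y := by
      rcases hcuv with hA | hB
      · exact hA
      · exact absurd (Or.inr ⟨hB.1, fun t h1 h2 h3 =>
          hB.2 t (hyp_lt.trans h1) h2 (h3.trans hyp_c)⟩) hnc
    rw [BoxCommute, not_or] at hnc
    have hngA : ¬ gapAbove i v yp := fun hg => hnc.1 ⟨hA.1, hg⟩
    obtain ⟨t, hvt, htyp, htc⟩ : ∃ t, v < t ∧ t ≤ yp ∧ i t = i v := by
      simp only [gapAbove, not_forall] at hngA
      obtain ⟨t, h1, h2, h3⟩ := hngA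
      exact ⟨t, h1, h2, not_not.mp h3⟩
    have hty : y < t := by
      by_contra hle
      exact hA.2 t hvt (not_lt.mp hle) htc
    have hgAyp : gapAbove i yp v := by
      intro s h1 h2 _
      omega
    have hngBx : ¬ gapBelow i x u := fun hg => hnc.2 ⟨hg, hgAyp⟩
    obtain ⟨s, hus, hsx, hsc⟩ : ∃ s, u ≤ s ∧ s < x ∧ i s = i x := by
      simp only [gapBelow, not_forall] at hngBx
      obtain ⟨s, h1, h2, h3⟩ := hngBx
      exact ⟨s, h1, h2, not_not.mp h3⟩
    obtain ⟨xm, ⟨hxm_lt, hxm_c⟩, hxm_max⟩ :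
        ∃ xm, (xm < x ∧ i xm = i x) ∧ ∀ z, (z < x ∧ i z = i x) → z ≤ xm :=
      Int.exists_greatest_of_bdd ⟨x, fun z hz => hz.1.le⟩ ⟨s, hsx, hsc⟩
    have hprev : PrevSame i x xm :=
      ⟨hxm_lt, hxm_c, fun r h1 h2 h3 => absurd (hxm_max r ⟨h2, h3⟩) (not_le.mpr h1)⟩
    have hsxm : s ≤ xm := hxm_max s ⟨hsx, hsc⟩
    have haxm : a ≤ xm := le_trans (le_trans (hF.2.1 _ huv).1 hus) hsxm
    refine Or.inl ⟨xm, hprev, mem_of_commutes i a b F hF (xm, y)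
      ⟨le_trans hxm_lt.le hbox.1, hxm_c.trans hbox.2⟩
      ⟨haxm, (hF.2.1 _ hxy).2⟩ ?_⟩
    rintro ⟨p, q⟩ hpq
    have hce : BoxCommute i p q x y := hF.1.2 _ hpq _ hxy
    rcases hce with hAe | hBe
    · by_cases hgp : gapBelow i p xm
      · exact Or.inl ⟨hgp, hAe.2⟩
      · obtain ⟨r, hxmr, hrp, hrc⟩ : ∃ r, xm ≤ r ∧ r < p ∧ i r = i p := by
          simp only [gapBelow, not_forall] at hgp
          obtain ⟨r, h1, h2, h3⟩ := hgp
          exact ⟨r, h1, h2, not_not.mp h3⟩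
        have hrx : r < x := by
          by_contra hle
          exact hAe.1 r (not_lt.mp hle) hrp hrc
        have hed : BoxCommute i p q u v := hF.1.2 _ hpq _ huv
        rcases hed with hA' | hB'
        · exact absurd hrc (hA'.1 r (le_trans (le_trans hus hsxm) hxmr) hrp)
        · have hqt : q < t := by
            by_contra hle
            exact hB'.2 t hvt (not_lt.mp hle) htc
          refine Or.inr ⟨?_, ?_⟩
          · intro s' h1 h2 _
            omega
          · intro s' h1 h2 h3
            exact hnext.2.2 s' h1 (by omega) h3
    · refine Or.inr ⟨?_, hBe.2⟩
      intro s' h1 h2 h3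
      exact hBe.1 s' h1 (h2.trans hxm_lt) (h3.trans hxm_c)

/-- For an exchangeable box `[x,y] ∈ F`, exactly one of `[x₋,y] ∈ F`, `[x,y₊] ∈ F` holds. -/
theorem exchangeable_neighbor (i : ℤ → I) (a b : ℤ) (hab : a ≤ b)
    (F : Set (ℤ × ℤ)) (hF : MaxCommFamily i a b F) (x y : ℤ) (hxy : (x, y) ∈ F)
    (hex : ¬ Frozen i a b (x, y)) :
    Xor' (∃ x', PrevSame i x x' ∧ (x', y) ∈ F)
         (∃ y', NextSame i y y' ∧ (x, y') ∈ F) := by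
  have hnotboth : ¬ ((∃ x', PrevSame i x x' ∧ (x', y) ∈ F) ∧
      (∃ y', NextSame i y y' ∧ (x, y') ∈ F)) := by
    rintro ⟨⟨x', hP, hx'⟩, ⟨y', hN, hy'⟩⟩
    have hc := hF.1.2 _ hx' _ hy'
    rcases hc with hcc | hcc
    · exact hcc.2 y' hN.1 le_rfl hN.2.1
    · exact hcc.1 x' le_rfl hP.1 hP.2.1
  have hor : (∃ x', PrevSame i x x' ∧ (x', y) ∈ F) ∨
      (∃ y', NextSame i y y' ∧ (x, y') ∈ F) := by
    rw [Frozen, not_and_or] at hex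
    rcases hex with h | h
    · exact left_case i a b F hF x y hxy h
    · exact right_case i a b F hF x y hxy h
  rcases hor with hA | hB
  · exact Or.inl ⟨hA, fun hB => hnotboth ⟨hA, hB⟩⟩
  · exact Or.inr ⟨hB, fun hA => hnotboth ⟨hA, hB⟩⟩

end IBoxes
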